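/- arXiv:2412.10971 — 3 statements merged into one kernel-verified Lean document; each statement's English description precedes it below -/
import Mathlib

section
/- For η₁ > 0, r₁ < 0 real, let Q(x,t) := -36·r₁·η₁²·e^{√3·η₁(x - 9η₁⁴t)} / (1 - 2r₁·e^{√3·η₁(x - 9η₁⁴t)})². Then Q is a smooth real-valued function on ℝ² and satisfies the Sawada–Kotera equation Q_t + Q_xxxxx + 5Q_x·Q_xx + 5Q·Q_xxx + 5Q²·Q_x = 0. -/
noncomputable def dX (f : ℝ → ℝ → ℝ) : ℝ → ℝ → ℝ := fun x t => deriv (fun x' => f x' t) x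
noncomputable def dT (f : ℝ → ℝ → ℝ) : ℝ → ℝ → ℝ := fun x t => deriv (fun t' => f x t') t

noncomputable def skA (r y : ℝ) : ℝ := r * Real.exp y

noncomputable def sk0 (r y : ℝ) : ℝ := ((-36) * skA r y) / (1 - 2 * skA r y) ^ 2
noncomputable def sk1 (r y : ℝ) : ℝ :=
  ((-36) * skA r y + (-72) * skA r y ^ 2) / (1 - 2 * skA r y) ^ 3
noncomputable def sk2 (r y : ℝ) : ℝ :=
  ((-36) * skA r y + (-288) * skA r y ^ 2 + (-144) * skA r y ^ 3) / (1 - 2 * skA r y) ^ 4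
noncomputable def sk3 (r y : ℝ) : ℝ :=
  ((-36) * skA r y + (-792) * skA r y ^ 2 + (-1584) * skA r y ^ 3 + (-288) * skA r y ^ 4) /
    (1 - 2 * skA r y) ^ 5
noncomputable def sk4 (r y : ℝ) : ℝ :=
  ((-36) * skA r y + (-1872) * skA r y ^ 2 + (-9504) * skA r y ^ 3 + (-7488) * skA r y ^ 4 +
      (-576) * skA r y ^ 5) / (1 - 2 * skA r y) ^ 6
noncomputable def sk5 (r y : ℝ) : ℝ :=
  ((-36) * skA r y + (-4104) * skA r y ^ 2 + (-43488) * skA r y ^ 3 + (-86976) * skA r y ^ 4 +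
      (-32832) * skA r y ^ 5 + (-1152) * skA r y ^ 6) / (1 - 2 * skA r y) ^ 7

lemma sk_d_pos {r : ℝ} (hr : r < 0) (y : ℝ) : 0 < 1 - 2 * skA r y := by
  have h := Real.exp_pos y
  unfold skA
  nlinarith

lemma hasDerivAt_skA (r y : ℝ) : HasDerivAt (skA r) (skA r y) y := by
  exact (Real.hasDerivAt_exp y).const_mul r

lemma hasDerivAt_denom (r : ℝ) (n : ℕ) (y : ℝ) :
    HasDerivAt (fun y => (1 - 2 * skA r y) ^ n)
      ((n : ℝ) * (1 - 2 * skA r y) ^ (n - 1) * (-(2 * skA r y))) y := by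
  exact (((hasDerivAt_skA r y).const_mul 2).const_sub 1).pow n

lemma hasDerivAt_sk0 {r : ℝ} (hr : r < 0) (y : ℝ) :
    HasDerivAt (sk0 r) (sk1 r y) y := by
  have hd : (1 - 2 * skA r y) ≠ 0 := ne_of_gt (sk_d_pos hr y)
  have hnum : HasDerivAt (fun y => (-36) * skA r y) ((-36) * skA r y) y :=
    (hasDerivAt_skA r y).const_mul (-36)
  have H := hnum.div (hasDerivAt_denom r 2 y) (pow_ne_zero 2 hd)
  refine H.congr_deriv ?_
  unfold sk1
  rw [div_eq_div_iff (pow_ne_zero _ (pow_ne_zero _ hd)) (pow_ne_zero _ hd)]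
  norm_num
  ring

lemma hasDerivAt_sk1 {r : ℝ} (hr : r < 0) (y : ℝ) :
    HasDerivAt (sk1 r) (sk2 r y) y := by
  have hd : (1 - 2 * skA r y) ≠ 0 := ne_of_gt (sk_d_pos hr y)
  have ha := hasDerivAt_skA r y
  have hnum : HasDerivAt (fun y => (-36) * skA r y + (-72) * skA r y ^ 2)
      ((-36) * skA r y + (-72) * (2 * skA r y ^ 1 * skA r y)) y :=
    (ha.const_mul (-36)).add ((ha.pow 2).const_mul (-72))
  have H := hnum.div (hasDerivAt_denom r 3 y) (pow_ne_zero 3 hd)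
  refine H.congr_deriv ?_
  unfold sk2
  rw [div_eq_div_iff (pow_ne_zero _ (pow_ne_zero _ hd)) (pow_ne_zero _ hd)]
  norm_num
  ring

lemma hasDerivAt_sk2 {r : ℝ} (hr : r < 0) (y : ℝ) :
    HasDerivAt (sk2 r) (sk3 r y) y := by
  have hd : (1 - 2 * skA r y) ≠ 0 := ne_of_gt (sk_d_pos hr y)
  have ha := hasDerivAt_skA r y
  have hnum : HasDerivAt
      (fun y => (-36) * skA r y + (-288) * skA r y ^ 2 + (-144) * skA r y ^ 3)
      ((-36) * skA r y + (-288) * (2 * skA r y ^ 1 * skA r y) +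
        (-144) * (3 * skA r y ^ 2 * skA r y)) y :=
    ((ha.const_mul (-36)).add ((ha.pow 2).const_mul (-288))).add ((ha.pow 3).const_mul (-144))
  have H := hnum.div (hasDerivAt_denom r 4 y) (pow_ne_zero 4 hd)
  refine H.congr_deriv ?_
  unfold sk3
  rw [div_eq_div_iff (pow_ne_zero _ (pow_ne_zero _ hd)) (pow_ne_zero _ hd)]
  norm_num
  ring

lemma hasDerivAt_sk3 {r : ℝ} (hr : r < 0) (y : ℝ) :
    HasDerivAt (sk3 r) (sk4 r y) y := by
  have hd : (1 - 2 * skA r y) ≠ 0 := ne_of_gt (sk_d_pos hr y)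
  have ha := hasDerivAt_skA r y
  have hnum : HasDerivAt
      (fun y => (-36) * skA r y + (-792) * skA r y ^ 2 + (-1584) * skA r y ^ 3 +
        (-288) * skA r y ^ 4)
      ((-36) * skA r y + (-792) * (2 * skA r y ^ 1 * skA r y) +
        (-1584) * (3 * skA r y ^ 2 * skA r y) + (-288) * (4 * skA r y ^ 3 * skA r y)) y :=
    (((ha.const_mul (-36)).add ((ha.pow 2).const_mul (-792))).add
      ((ha.pow 3).const_mul (-1584))).add ((ha.pow 4).const_mul (-288))
  have H := hnum.div (hasDerivAt_denom r 5 y) (pow_ne_zero 5 hd)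
  refine H.congr_deriv ?_
  unfold sk4
  rw [div_eq_div_iff (pow_ne_zero _ (pow_ne_zero _ hd)) (pow_ne_zero _ hd)]
  norm_num
  ring

lemma hasDerivAt_sk4 {r : ℝ} (hr : r < 0) (y : ℝ) :
    HasDerivAt (sk4 r) (sk5 r y) y := by
  have hd : (1 - 2 * skA r y) ≠ 0 := ne_of_gt (sk_d_pos hr y)
  have ha := hasDerivAt_skA r y
  have hnum : HasDerivAt
      (fun y => (-36) * skA r y + (-1872) * skA r y ^ 2 + (-9504) * skA r y ^ 3 +
        (-7488) * skA r y ^ 4 + (-576) * skA r y ^ 5)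
      ((-36) * skA r y + (-1872) * (2 * skA r y ^ 1 * skA r y) +
        (-9504) * (3 * skA r y ^ 2 * skA r y) + (-7488) * (4 * skA r y ^ 3 * skA r y) +
        (-576) * (5 * skA r y ^ 4 * skA r y)) y :=
    ((((ha.const_mul (-36)).add ((ha.pow 2).const_mul (-1872))).add
      ((ha.pow 3).const_mul (-9504))).add ((ha.pow 4).const_mul (-7488))).add
      ((ha.pow 5).const_mul (-576))
  have H := hnum.div (hasDerivAt_denom r 6 y) (pow_ne_zero 6 hd)
  refine H.congr_deriv ?_
  unfold sk5
  rw [div_eq_div_iff (pow_ne_zero _ (pow_ne_zero _ hd)) (pow_ne_zero _ hd)]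
  norm_num
  ring

lemma sk_identity {r : ℝ} (hr : r < 0) (y : ℝ) :
    9 * (sk5 r y - sk1 r y) + 15 * (sk1 r y * sk2 r y + sk0 r y * sk3 r y) +
      5 * sk0 r y ^ 2 * sk1 r y = 0 := by
  have hd : (1 - 2 * skA r y) ≠ 0 := ne_of_gt (sk_d_pos hr y)
  unfold sk0 sk1 sk2 sk3 sk5
  field_simp
  ring

lemma sk_step (r c s K : ℝ) (F : ℝ → ℝ → ℝ) (g g' : ℝ → ℝ)
    (hg : ∀ y, HasDerivAt g (g' y) y)
    (hF : ∀ x t, F x t = K * g (c * (x - s * t))) :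
    ∀ x t, dX F x t = (K * c) * g' (c * (x - s * t)) := by
  intro x t
  have hlin : HasDerivAt (fun x' : ℝ => c * (x' - s * t)) c x := by
    simpa using ((hasDerivAt_id x).sub_const (s * t)).const_mul c
  have H : HasDerivAt (fun x' => K * g (c * (x' - s * t)))
      (K * (g' (c * (x - s * t)) * c)) x :=
    (((hg (c * (x - s * t))).comp x hlin)).const_mul K
  have hfun : (fun x' => F x' t) = fun x' => K * g (c * (x' - s * t)) :=
    funext fun x' => hF x' t
  show deriv (fun x' => F x' t) x = (K * c) * g' (c * (x - s * t))
  rw [hfun, H.deriv]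
  ring

lemma sk_stepT (r c s K : ℝ) (F : ℝ → ℝ → ℝ) (g g' : ℝ → ℝ)
    (hg : ∀ y, HasDerivAt g (g' y) y)
    (hF : ∀ x t, F x t = K * g (c * (x - s * t))) :
    ∀ x t, dT F x t = (-(K * c * s)) * g' (c * (x - s * t)) := by
  intro x t
  have hlin : HasDerivAt (fun t' : ℝ => c * (x - s * t')) (c * (-s)) t := by
    simpa using (((hasDerivAt_id t).const_mul s).const_sub x).const_mul c
  have H : HasDerivAt (fun t' => K * g (c * (x - s * t')))
      (K * (g' (c * (x - s * t)) * (c * (-s)))) t :=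
    (((hg (c * (x - s * t))).comp t hlin)).const_mul K
  have hfun : (fun t' => F x t') = fun t' => K * g (c * (x - s * t')) :=
    funext fun t' => hF x t'
  show deriv (fun t' => F x t') t = (-(K * c * s)) * g' (c * (x - s * t))
  rw [hfun, H.deriv]
  ring

theorem stmt_7 (η₁ r₁ : ℝ) (hη : 0 < η₁) (hr : r₁ < 0)
    (Q : ℝ → ℝ → ℝ)
    (hQdef : ∀ x t : ℝ, Q x t =
      -36 * r₁ * η₁ ^ 2 * Real.exp (Real.sqrt 3 * η₁ * (x - 9 * η₁ ^ 4 * t)) /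
        (1 - 2 * r₁ * Real.exp (Real.sqrt 3 * η₁ * (x - 9 * η₁ ^ 4 * t))) ^ 2) :
    ContDiff ℝ (⊤ : ℕ∞) (fun p : ℝ × ℝ => Q p.1 p.2) ∧
    ∀ x t : ℝ,
      dT Q x t + dX (dX (dX (dX (dX Q)))) x t
        + 5 * dX Q x t * dX (dX Q) x t + 5 * Q x t * dX (dX (dX Q)) x t
        + 5 * (Q x t) ^ 2 * dX Q x t = 0 := by
  set c : ℝ := Real.sqrt 3 * η₁ with hc
  have h0 : ∀ x t : ℝ, Q x t = η₁ ^ 2 * sk0 r₁ (c * (x - 9 * η₁ ^ 4 * t)) := by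
    intro x t
    rw [hQdef]
    have : c * (x - 9 * η₁ ^ 4 * t) = Real.sqrt 3 * η₁ * (x - 9 * η₁ ^ 4 * t) := by
      rw [hc]
    rw [this]
    unfold sk0 skA
    ring
  have h1 := sk_step r₁ c (9 * η₁ ^ 4) (η₁ ^ 2) Q (sk0 r₁) (sk1 r₁)
    (fun y => hasDerivAt_sk0 hr y) h0
  have h2 := sk_step r₁ c (9 * η₁ ^ 4) (η₁ ^ 2 * c) (dX Q) (sk1 r₁) (sk2 r₁)
    (fun y => hasDerivAt_sk1 hr y) h1
  have h3 := sk_step r₁ c (9 * η₁ ^ 4) (η₁ ^ 2 * c * c) (dX (dX Q)) (sk2 r₁) (sk3 r₁)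
    (fun y => hasDerivAt_sk2 hr y) h2
  have h4 := sk_step r₁ c (9 * η₁ ^ 4) (η₁ ^ 2 * c * c * c) (dX (dX (dX Q))) (sk3 r₁) (sk4 r₁)
    (fun y => hasDerivAt_sk3 hr y) h3
  have h5 := sk_step r₁ c (9 * η₁ ^ 4) (η₁ ^ 2 * c * c * c * c) (dX (dX (dX (dX Q))))
    (sk4 r₁) (sk5 r₁) (fun y => hasDerivAt_sk4 hr y) h4
  have hT := sk_stepT r₁ c (9 * η₁ ^ 4) (η₁ ^ 2) Q (sk0 r₁) (sk1 r₁)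
    (fun y => hasDerivAt_sk0 hr y) h0
  constructor
  · have hfun : (fun p : ℝ × ℝ => Q p.1 p.2) =
        fun p : ℝ × ℝ => η₁ ^ 2 * sk0 r₁ (c * (p.1 - 9 * η₁ ^ 4 * p.2)) :=
      funext fun p => h0 p.1 p.2
    rw [hfun]
    have hsk : ContDiff ℝ (⊤ : ℕ∞) (sk0 r₁) := by
      apply ContDiff.div
      · unfold skA
        fun_prop
      · unfold skA
        fun_prop
      · intro y
        exact pow_ne_zero 2 (ne_of_gt (sk_d_pos hr y))
    exact contDiff_const.mul (hsk.comp (by fun_prop))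
  · intro x t
    rw [hT x t, h5 x t, h1 x t, h2 x t, h0 x t, h3 x t]
    have hq2 : Real.sqrt 3 ^ 2 = 3 := Real.sq_sqrt (by norm_num)
    have hiden := sk_identity hr (c * (x - 9 * η₁ ^ 4 * t))
    set Y := c * (x - 9 * η₁ ^ 4 * t)
    rw [hc]
    linear_combination (Real.sqrt 3 * η₁ ^ 7) * hiden +
      (η₁ ^ 7 * Real.sqrt 3 * (Real.sqrt 3 ^ 2 + 3) * sk5 r₁ Y +
        5 * η₁ ^ 7 * Real.sqrt 3 * (sk1 r₁ Y * sk2 r₁ Y + sk0 r₁ Y * sk3 r₁ Y)) * hq2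
end

section
/- For η₁ > 0, r₁ > 0 real, let Q(x,t) := 18·r₁·η₁²·e^{√3·η₁(x - 9η₁⁴t)} / (1 + r₁·e^{√3·η₁(x - 9η₁⁴t)})². Then Q is a smooth real-valued function on ℝ² and satisfies the Sawada–Kotera equation Q_t + Q_xxxxx + 5Q_x·Q_xx + 5Q·Q_xxx + 5Q²·Q_x = 0. -/
namespace SK8

noncomputable def g0 (r k : ℝ) : ℝ → ℝ := fun s =>
  6*k^2 * (r * Real.exp (k*s)) / (1 + r * Real.exp (k*s))^2
noncomputable def g1 (r k : ℝ) : ℝ → ℝ := fun s =>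
  6*k^3 * (r * Real.exp (k*s) - (r * Real.exp (k*s))^2) / (1 + r * Real.exp (k*s))^3
noncomputable def g2 (r k : ℝ) : ℝ → ℝ := fun s =>
  6*k^4 * (r * Real.exp (k*s) - 4*(r * Real.exp (k*s))^2 + (r * Real.exp (k*s))^3) /
    (1 + r * Real.exp (k*s))^4
noncomputable def g3 (r k : ℝ) : ℝ → ℝ := fun s =>
  6*k^5 * (r * Real.exp (k*s) - 11*(r * Real.exp (k*s))^2 + 11*(r * Real.exp (k*s))^3
    - (r * Real.exp (k*s))^4) / (1 + r * Real.exp (k*s))^5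
noncomputable def g4 (r k : ℝ) : ℝ → ℝ := fun s =>
  6*k^6 * (r * Real.exp (k*s) - 26*(r * Real.exp (k*s))^2 + 66*(r * Real.exp (k*s))^3
    - 26*(r * Real.exp (k*s))^4 + (r * Real.exp (k*s))^5) / (1 + r * Real.exp (k*s))^6
noncomputable def g5 (r k : ℝ) : ℝ → ℝ := fun s =>
  6*k^7 * (r * Real.exp (k*s) - 57*(r * Real.exp (k*s))^2 + 302*(r * Real.exp (k*s))^3
    - 302*(r * Real.exp (k*s))^4 + 57*(r * Real.exp (k*s))^5 - (r * Real.exp (k*s))^6) /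
    (1 + r * Real.exp (k*s))^7

lemma hE (r k s : ℝ) :
    HasDerivAt (fun s => r * Real.exp (k*s)) (k * (r * Real.exp (k*s))) s := by
  have h1 : HasDerivAt (fun s : ℝ => k*s) k s := by
    simpa using (hasDerivAt_id s).const_mul k
  have := (Real.hasDerivAt_exp (k*s)).comp s h1
  simpa [mul_comm, mul_assoc, mul_left_comm] using this.const_mul r

lemma hDne (r k s : ℝ) (hr : 0 < r) : (1 + r * Real.exp (k*s)) ≠ 0 := by positivity

lemma hg0 (r k : ℝ) (hr : 0 < r) (s : ℝ) : HasDerivAt (g0 r k) (g1 r k s) s := by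
  set E := r * Real.exp (k*s) with hEdef
  have hE' := hE r k s
  have hD := hDne r k s hr
  have hnum := hE'.const_mul (6*k^2)
  have hden := (hE'.const_add 1).pow 2
  have h := hnum.div hden (pow_ne_zero 2 hD)
  have heq : (6*k^2 * (k*E) * (1+E)^2 - 6*k^2*E * (↑2*(1+E)^(2-1) * (k*E))) / ((1+E)^2)^2
      = g1 r k s := by
    simp only [g1, ← hEdef]
    have hD' : (1 + E) ≠ 0 := hD
    field_simp
    ring
  exact heq ▸ h

lemma hg1 (r k : ℝ) (hr : 0 < r) (s : ℝ) : HasDerivAt (g1 r k) (g2 r k s) s := by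
  set E := r * Real.exp (k*s) with hEdef
  have hE' := hE r k s
  have hD := hDne r k s hr
  have hnum := (hE'.sub (hE'.pow 2)).const_mul (6*k^3)
  have hden := (hE'.const_add 1).pow 3
  have h := hnum.div hden (pow_ne_zero 3 hD)
  have heq : (6*k^3 * (k*E - ↑2*E^(2-1)*(k*E)) * (1+E)^3
      - 6*k^3*(E - E^2) * (↑3*(1+E)^(3-1) * (k*E))) / ((1+E)^3)^2 = g2 r k s := by
    simp only [g2, ← hEdef]
    have hD' : (1 + E) ≠ 0 := hD
    field_simp
    ring
  exact heq ▸ h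

lemma hg2 (r k : ℝ) (hr : 0 < r) (s : ℝ) : HasDerivAt (g2 r k) (g3 r k s) s := by
  set E := r * Real.exp (k*s) with hEdef
  have hE' := hE r k s
  have hD := hDne r k s hr
  have hnum := ((hE'.sub ((hE'.pow 2).const_mul 4)).add (hE'.pow 3)).const_mul (6*k^4)
  have hden := (hE'.const_add 1).pow 4
  have h := hnum.div hden (pow_ne_zero 4 hD)
  have heq : (6*k^4 * (k*E - 4*(↑2*E^(2-1)*(k*E)) + ↑3*E^(3-1)*(k*E)) * (1+E)^4
      - 6*k^4*(E - 4*E^2 + E^3) * (↑4*(1+E)^(4-1) * (k*E))) / ((1+E)^4)^2 = g3 r k s := by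
    simp only [g3, ← hEdef]
    have hD' : (1 + E) ≠ 0 := hD
    field_simp
    ring
  exact heq ▸ h

lemma hg3 (r k : ℝ) (hr : 0 < r) (s : ℝ) : HasDerivAt (g3 r k) (g4 r k s) s := by
  set E := r * Real.exp (k*s) with hEdef
  have hE' := hE r k s
  have hD := hDne r k s hr
  have hnum := (((hE'.sub ((hE'.pow 2).const_mul 11)).add ((hE'.pow 3).const_mul 11)).sub
    (hE'.pow 4)).const_mul (6*k^5)
  have hden := (hE'.const_add 1).pow 5
  have h := hnum.div hden (pow_ne_zero 5 hD)
  have heq : (6*k^5 * (k*E - 11*(↑2*E^(2-1)*(k*E)) + 11*(↑3*E^(3-1)*(k*E))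
      - ↑4*E^(4-1)*(k*E)) * (1+E)^5
      - 6*k^5*(E - 11*E^2 + 11*E^3 - E^4) * (↑5*(1+E)^(5-1) * (k*E))) / ((1+E)^5)^2
      = g4 r k s := by
    simp only [g4, ← hEdef]
    have hD' : (1 + E) ≠ 0 := hD
    field_simp
    ring
  exact heq ▸ h

lemma hg4 (r k : ℝ) (hr : 0 < r) (s : ℝ) : HasDerivAt (g4 r k) (g5 r k s) s := by
  set E := r * Real.exp (k*s) with hEdef
  have hE' := hE r k s
  have hD := hDne r k s hr
  have hnum := ((((hE'.sub ((hE'.pow 2).const_mul 26)).add ((hE'.pow 3).const_mul 66)).sub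
    ((hE'.pow 4).const_mul 26)).add (hE'.pow 5)).const_mul (6*k^6)
  have hden := (hE'.const_add 1).pow 6
  have h := hnum.div hden (pow_ne_zero 6 hD)
  have heq : (6*k^6 * (k*E - 26*(↑2*E^(2-1)*(k*E)) + 66*(↑3*E^(3-1)*(k*E))
      - 26*(↑4*E^(4-1)*(k*E)) + ↑5*E^(5-1)*(k*E)) * (1+E)^6
      - 6*k^6*(E - 26*E^2 + 66*E^3 - 26*E^4 + E^5) * (↑6*(1+E)^(6-1) * (k*E))) / ((1+E)^6)^2
      = g5 r k s := by
    simp only [g5, ← hEdef]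
    have hD' : (1 + E) ≠ 0 := hD
    field_simp
    ring
  exact heq ▸ h

lemma pde (r k : ℝ) (hr : 0 < r) (s : ℝ) :
    g1 r k s * (-(k^4)) + g5 r k s + 5 * g1 r k s * g2 r k s + 5 * g0 r k s * g3 r k s
      + 5 * (g0 r k s)^2 * g1 r k s = 0 := by
  have hD := hDne r k s hr
  simp only [g0, g1, g2, g3, g5]
  field_simp
  ring

lemma dX_shift (c : ℝ) (f f' : ℝ → ℝ) (hf : ∀ s, HasDerivAt f (f' s) s)
    (F : ℝ → ℝ → ℝ) (hF : ∀ x t, F x t = f (x - c*t)) :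
    ∀ x t, dX F x t = f' (x - c*t) := by
  intro x t
  unfold dX
  have h1 : (fun x' => F x' t) = fun x' => f (x' - c*t) := funext fun x' => hF x' t
  rw [h1]
  have h2 : HasDerivAt (fun x' => f (x' - c*t)) (f' (x - c*t) * 1) x :=
    (hf (x - c*t)).comp x ((hasDerivAt_id x).sub_const (c*t))
  simpa using h2.deriv

end SK8

theorem stmt_8 (η₁ r₁ : ℝ) (hη : 0 < η₁) (hr : 0 < r₁)
    (Q : ℝ → ℝ → ℝ)
    (hQdef : ∀ x t : ℝ, Q x t =
      18 * r₁ * η₁ ^ 2 * Real.exp (Real.sqrt 3 * η₁ * (x - 9 * η₁ ^ 4 * t)) /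
        (1 + r₁ * Real.exp (Real.sqrt 3 * η₁ * (x - 9 * η₁ ^ 4 * t))) ^ 2) :
    ContDiff ℝ (⊤ : ℕ∞) (fun p : ℝ × ℝ => Q p.1 p.2) ∧
    ∀ x t : ℝ,
      dT Q x t + dX (dX (dX (dX (dX Q)))) x t
        + 5 * dX Q x t * dX (dX Q) x t + 5 * Q x t * dX (dX (dX Q)) x t
        + 5 * (Q x t) ^ 2 * dX Q x t = 0 := by
  set k : ℝ := Real.sqrt 3 * η₁ with hk
  set c : ℝ := 9 * η₁ ^ 4 with hc
  have h3 : Real.sqrt 3 ^ 2 = 3 := Real.sq_sqrt (by norm_num)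
  have hk2 : k^2 = 3 * η₁^2 := by rw [hk]; rw [mul_pow, h3]
  have hk4 : k^4 = c := by
    have : k^4 = (k^2)^2 := by ring
    rw [this, hk2, hc]; ring
  have hQg : ∀ x t : ℝ, Q x t = SK8.g0 r₁ k (x - c*t) := by
    intro x t
    rw [hQdef, SK8.g0]
    have : 18 * r₁ * η₁ ^ 2 = 6*k^2 * r₁ := by rw [hk2]; ring
    rw [this]
    ring_nf
  constructor
  · have hcd : ContDiff ℝ (⊤ : ℕ∞) (SK8.g0 r₁ k) := by
      apply ContDiff.div
      · fun_prop
      · fun_prop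
      · intro s
        exact pow_ne_zero 2 (SK8.hDne r₁ k s hr)
    have hlin : ContDiff ℝ (⊤ : ℕ∞) (fun p : ℝ × ℝ => p.1 - c * p.2) := by fun_prop
    have : (fun p : ℝ × ℝ => Q p.1 p.2) = fun p : ℝ × ℝ => SK8.g0 r₁ k (p.1 - c * p.2) :=
      funext fun p => hQg p.1 p.2
    rw [this]
    exact hcd.comp hlin
  · intro x t
    have h1 := SK8.dX_shift c _ _ (SK8.hg0 r₁ k hr) Q hQg
    have h2 := SK8.dX_shift c _ _ (SK8.hg1 r₁ k hr) (dX Q) h1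
    have h3' := SK8.dX_shift c _ _ (SK8.hg2 r₁ k hr) (dX (dX Q)) h2
    have h4 := SK8.dX_shift c _ _ (SK8.hg3 r₁ k hr) (dX (dX (dX Q))) h3'
    have h5 := SK8.dX_shift c _ _ (SK8.hg4 r₁ k hr) (dX (dX (dX (dX Q)))) h4
    have hT : dT Q x t = SK8.g1 r₁ k (x - c*t) * (-c) := by
      unfold dT
      have he : (fun t' => Q x t') = fun t' => SK8.g0 r₁ k (x - c*t') :=
        funext fun t' => hQg x t'
      rw [he]
      have hin : HasDerivAt (fun t' : ℝ => x - c*t') (-c) t := by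
        simpa using ((hasDerivAt_id t).const_mul c).const_sub x
      have := (SK8.hg0 r₁ k hr (x - c*t)).comp t hin
      simpa [Function.comp_def] using this.deriv
    rw [hT, h5 x t, h1 x t, h2 x t, h3' x t, hQg x t]
    have := SK8.pde r₁ k hr (x - c*t)
    rw [hk4] at this
    linarith
end

section
/- For η₁ > 0 and γ > 0, the function q(x,t) := -9·γ·η₁²·e^{√3·η₁(x + 3η₁t)} / (2·(1 + γ·e^{√3·η₁(x + 3η₁t)})²) satisfies the modified bad Boussinesq equation q_tt + 12·(q²)_xx - 3·q_xxxx = 0. -/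
theorem iterate_dX_comp_add_mul (φ : ℝ → ℝ) (c : ℝ) (n : ℕ) :
    dX^[n] (fun x t => φ (x + c * t)) = fun x t => iteratedDeriv n φ (x + c * t) := by
  induction n with
  | zero => rfl
  | succ n ih =>
    rw [Function.iterate_succ_apply', ih, iteratedDeriv_succ]
    funext x t
    exact deriv_comp_add_const _ _ _

theorem iterate_dT_comp_add_mul (φ : ℝ → ℝ) (c : ℝ) (n : ℕ) :
    dT^[n] (fun x t => φ (x + c * t)) = fun x t => c ^ n * iteratedDeriv n φ (x + c * t) := by
  induction n with
  | zero => simp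
  | succ n ih =>
    rw [Function.iterate_succ_apply', ih, iteratedDeriv_succ]
    funext x t
    have h : deriv (fun t' => iteratedDeriv n φ (x + c * t')) t
        = c * deriv (iteratedDeriv n φ) (x + c * t) := by
      have := deriv_comp_mul_left c (fun u => iteratedDeriv n φ (x + u)) t
      simpa only [deriv_comp_const_add, smul_eq_mul] using this
    simp only [dT, deriv_const_mul_field', h]
    ring

theorem iteratedDeriv_four_of_iteratedDeriv_two_eq {𝕜 : Type*} [NontriviallyNormedField 𝕜]
    {φ : 𝕜 → 𝕜} {a b : 𝕜} (hφ : ContDiff 𝕜 2 φ)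
    (h : iteratedDeriv 2 φ = fun s => a * φ s + b * φ s ^ 2) (s : 𝕜) :
    iteratedDeriv 4 φ s = a * iteratedDeriv 2 φ s + b * iteratedDeriv 2 (fun s => φ s ^ 2) s := by
  have h4 : iteratedDeriv 4 φ = iteratedDeriv 2 (fun s => a * φ s + b * φ s ^ 2) := by
    rw [← h, iteratedDeriv_eq_iterate, iteratedDeriv_eq_iterate, iteratedDeriv_eq_iterate,
      ← Function.iterate_add_apply]
  rw [h4, iteratedDeriv_fun_add (by fun_prop) (by fun_prop), iteratedDeriv_const_mul_field,
    iteratedDeriv_const_mul_field]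

open Real

theorem sigmoid_mul_one_sub_sigmoid (x : ℝ) :
    sigmoid x * (1 - sigmoid x) = exp x / (1 + exp x) ^ 2 := by
  rw [← sigmoid_neg, ← sigmoid_mul_rexp_neg, sigmoid_def, exp_neg]
  field

theorem iteratedDeriv_two_sigmoid_mul_one_sub (x : ℝ) :
    iteratedDeriv 2 (fun x => sigmoid x * (1 - sigmoid x)) x
      = sigmoid x * (1 - sigmoid x) * (1 - 6 * (sigmoid x * (1 - sigmoid x))) := by
  have hw : ∀ x, HasDerivAt (fun x => sigmoid x * (1 - sigmoid x))
      ((1 - 2 * sigmoid x) * (sigmoid x * (1 - sigmoid x))) x := fun x =>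
    ((hasDerivAt_sigmoid x).mul ((hasDerivAt_sigmoid x).const_sub 1)).congr_deriv (by ring)
  have hw' := ((hasDerivAt_sigmoid x).const_mul 2 |>.const_sub 1).fun_mul (hw x)
  rw [iteratedDeriv_succ, iteratedDeriv_one, funext fun x => (hw x).deriv, hw'.deriv]
  ring

theorem iteratedDeriv_comp_mul_add {𝕜 : Type*} [NontriviallyNormedField 𝕜] {f : 𝕜 → 𝕜} {n : ℕ}
    (hf : ContDiff 𝕜 n f) (a b x : 𝕜) :
    iteratedDeriv n (fun x => f (a * x + b)) x = a ^ n * iteratedDeriv n f (a * x + b) := by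
  have := iteratedDeriv_comp_const_mul (f := fun y => f (y + b)) (by fun_prop) a
  simpa only [iteratedDeriv_comp_add_const] using congrFun this x

noncomputable def boussinesqSoliton (η γ s : ℝ) : ℝ :=
  -9 * γ * η ^ 2 * exp (√3 * η * s) / (2 * (1 + γ * exp (√3 * η * s)) ^ 2)

section Soliton

variable {η γ : ℝ}

theorem boussinesqSoliton_eq_sigmoid (hγ : 0 < γ) :
    boussinesqSoliton η γ = fun s =>
      -(9 * η ^ 2 / 2) * (sigmoid (√3 * η * s + log γ) * (1 - sigmoid (√3 * η * s + log γ))) := by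
  funext s
  rw [boussinesqSoliton, sigmoid_mul_one_sub_sigmoid, exp_add, exp_log hγ]
  field

theorem contDiff_boussinesqSoliton (hγ : 0 < γ) (n : ℕ) : ContDiff ℝ n (boussinesqSoliton η γ) := by
  rw [boussinesqSoliton_eq_sigmoid hγ]
  have : ContDiff ℝ n sigmoid := contDiff_sigmoid.of_le le_top
  fun_prop

theorem iteratedDeriv_two_boussinesqSoliton (hγ : 0 < γ) :
    iteratedDeriv 2 (boussinesqSoliton η γ) = fun s =>
      3 * η ^ 2 * boussinesqSoliton η γ s + 4 * boussinesqSoliton η γ s ^ 2 := by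
  funext s
  have hw : ContDiff ℝ 2 fun x => sigmoid x * (1 - sigmoid x) := by
    have : ContDiff ℝ 2 sigmoid := contDiff_sigmoid.of_le le_top
    fun_prop
  rw [boussinesqSoliton_eq_sigmoid hγ, iteratedDeriv_const_mul_field,
    iteratedDeriv_comp_mul_add hw, iteratedDeriv_two_sigmoid_mul_one_sub]
  have h3 : √3 ^ 2 = 3 := sq_sqrt (by norm_num)
  set w := sigmoid (√3 * η * s + log γ) * (1 - sigmoid (√3 * η * s + log γ))
  linear_combination (-(9 * η ^ 2 / 2) * η ^ 2 * w * (1 - 6 * w)) * h3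

end Soliton

theorem stmt_12_general (η₁ γ : ℝ) (hγ : 0 < γ)
    (q : ℝ → ℝ → ℝ)
    (hqdef : ∀ x t : ℝ, q x t =
      -9 * γ * η₁ ^ 2 * Real.exp (Real.sqrt 3 * η₁ * (x + 3 * η₁ * t)) /
        (2 * (1 + γ * Real.exp (Real.sqrt 3 * η₁ * (x + 3 * η₁ * t))) ^ 2)) :
    ∀ x t : ℝ,
      dT (dT q) x t + 12 * dX (dX (fun x' t' => (q x' t') ^ 2)) x t
        - 3 * dX (dX (dX (dX q))) x t = 0 := by
  intro x t
  set φ := boussinesqSoliton η₁ γ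
  have hq : q = fun x t => φ (x + 3 * η₁ * t) := funext₂ hqdef
  have hTT : dT (dT q) x t = (3 * η₁) ^ 2 * iteratedDeriv 2 φ (x + 3 * η₁ * t) := by
    rw [hq]; exact congrFun₂ (iterate_dT_comp_add_mul φ (3 * η₁) 2) x t
  have hXX : dX (dX fun x t => q x t ^ 2) x t
      = iteratedDeriv 2 (fun s => φ s ^ 2) (x + 3 * η₁ * t) := by
    rw [hq]; exact congrFun₂ (iterate_dX_comp_add_mul (fun s => φ s ^ 2) (3 * η₁) 2) x t
  have hXXXX : dX (dX (dX (dX q))) x t = iteratedDeriv 4 φ (x + 3 * η₁ * t) := by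
    rw [hq]; exact congrFun₂ (iterate_dX_comp_add_mul φ (3 * η₁) 4) x t
  rw [hTT, hXX, hXXXX, iteratedDeriv_four_of_iteratedDeriv_two_eq
    (contDiff_boussinesqSoliton hγ 2) (iteratedDeriv_two_boussinesqSoliton hγ)]
  ring

theorem stmt_12 (η₁ γ : ℝ) (hη : 0 < η₁) (hγ : 0 < γ)
    (q : ℝ → ℝ → ℝ)
    (hqdef : ∀ x t : ℝ, q x t =
      -9 * γ * η₁ ^ 2 * Real.exp (Real.sqrt 3 * η₁ * (x + 3 * η₁ * t)) /
        (2 * (1 + γ * Real.exp (Real.sqrt 3 * η₁ * (x + 3 * η₁ * t))) ^ 2)) :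
    ∀ x t : ℝ,
      dT (dT q) x t + 12 * dX (dX (fun x' t' => (q x' t') ^ 2)) x t
        - 3 * dX (dX (dX (dX q))) x t = 0 :=
  stmt_12_general η₁ γ hγ q hqdef
end
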